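/- For integers n, k, m with 1 ≤ k ≤ n-2 and 1 ≤ m ≤ n-k-1, and 0 ≤ α < 1, the D_α spectral radius of the digraph K(n,k,m) equals (αm + αn + n - 2 + sqrt((1-α)²n² + (2α²-6α+4)mn + (α²+4α-4)m² - 4(1-α)km))/2. -/

import Mathlib

open Matrix BigOperators

/-- Spectral radius of a real square matrix: the largest modulus of its complex eigenvalues. -/
noncomputable def specRad {n : ℕ} (M : Matrix (Fin n) (Fin n) ℝ) : ℝ :=
  sSup {r : ℝ | ∃ μ ∈ spectrum ℂ (M.map (fun x => (x : ℂ))), r = ‖μ‖}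

/-- A matrix is irreducible iff its associated digraph is strongly connected. -/
def Irred {n : ℕ} (M : Matrix (Fin n) (Fin n) ℝ) : Prop :=
  ∀ i j : Fin n, Relation.ReflTransGen (fun a b => M a b ≠ 0) i j

/-- A directed walk of length `k` from `i` to `j` in a digraph. -/
def DWalk {n : ℕ} (G : Digraph (Fin n)) (i j : Fin n) (k : ℕ) : Prop :=
  ∃ f : ℕ → Fin n, f 0 = i ∧ f k = j ∧ ∀ l < k, G.Adj (f l) (f (l + 1))

/-- A digraph is strongly connected iff every vertex can reach every vertex. -/
def SConn {n : ℕ} (G : Digraph (Fin n)) : Prop :=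
  ∀ i j : Fin n, ∃ k : ℕ, DWalk G i j k

/-- A simple digraph has no loops. -/
def Loopless {n : ℕ} (G : Digraph (Fin n)) : Prop := ∀ i : Fin n, ¬ G.Adj i i

/-- Directed distance from `i` to `j`. -/
noncomputable def ddist {n : ℕ} (G : Digraph (Fin n)) (i j : Fin n) : ℕ :=
  sInf {k : ℕ | DWalk G i j k}

/-- Transmission of vertex `i`: sum of distances from `i` to all vertices. -/
noncomputable def transm {n : ℕ} (G : Digraph (Fin n)) (i : Fin n) : ℝ :=
  ∑ j : Fin n, (ddist G i j : ℝ)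

/-- The generalized distance matrix `D_α(G) = α·Diag(Tr) + (1-α)·D(G)`. -/
noncomputable def Dalpha {n : ℕ} (α : ℝ) (G : Digraph (Fin n)) : Matrix (Fin n) (Fin n) ℝ :=
  α • Matrix.diagonal (transm G) + (1 - α) • (Matrix.of fun i j => (ddist G i j : ℝ))

/-- The `D_α` spectral radius of a digraph. -/
noncomputable def mualpha {n : ℕ} (α : ℝ) (G : Digraph (Fin n)) : ℝ :=
  specRad (Dalpha α G)

/-- Isomorphism of digraphs on `Fin n`. -/
def IsoD {n : ℕ} (G H : Digraph (Fin n)) : Prop :=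
  ∃ e : Fin n ≃ Fin n, ∀ i j : Fin n, G.Adj i j ↔ H.Adj (e i) (e j)

/-- The digraph `K(n,k,m)`: vertices `0..k-1` form `K↔ₖ`, `k..k+m-1` form `K↔ₘ`,
`k+m..n-1` form `K↔_{n-k-m}`; all arcs present except those from `K↔_{n-k-m}` to `K↔ₘ`. -/
def KD (n k m : ℕ) : Digraph (Fin n) :=
  ⟨fun i j => i ≠ j ∧ ¬(k + m ≤ (i : ℕ) ∧ k ≤ (j : ℕ) ∧ (j : ℕ) < k + m)⟩

/-- A directed walk staying inside a vertex set `A`. -/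
def DWalkIn {n : ℕ} (G : Digraph (Fin n)) (A : Set (Fin n)) (i j : Fin n) (k : ℕ) : Prop :=
  ∃ f : ℕ → Fin n, f 0 = i ∧ f k = j ∧ (∀ l ≤ k, f l ∈ A) ∧ ∀ l < k, G.Adj (f l) (f (l + 1))

/-- The induced subdigraph on `A` is strongly connected. -/
def SCOn {n : ℕ} (G : Digraph (Fin n)) (A : Set (Fin n)) : Prop :=
  ∀ i ∈ A, ∀ j ∈ A, ∃ k : ℕ, DWalkIn G A i j k


/-!
`D_α(K(n,k,m))` is entrywise nonnegative for `0 ≤ α ≤ 1`. Its distances are `0`, `1`, or `2`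
(the latter exactly from the last block to the middle one, through any vertex of the first), so a
vector constant on the first `k + m` and on the last `n - k - m` vertices is mapped to a vector of
the same shape by a `2 × 2` quotient matrix. For `α < 1` the larger root of that matrix's
characteristic polynomial, which is the claimed value, has a positive eigenvector, and an
eigenvalue of a nonnegative matrix with a positive eigenvector is its spectral radius.
-/

open Finset

theorem Matrix.mem_spectrum_iff_exists_mulVec_eq_smul {K ι : Type*} [Field K] [Fintype ι]
    [DecidableEq ι] (A : Matrix ι ι K) (μ : K) :
    μ ∈ spectrum K A ↔ ∃ v ≠ 0, A *ᵥ v = μ • v := by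
  rw [← Matrix.spectrum_toLin', ← Module.End.hasEigenvalue_iff_mem_spectrum]
  refine ⟨fun h => ?_, fun ⟨v, hv, hAv⟩ => ?_⟩
  · obtain ⟨v, hv⟩ := h.exists_hasEigenvector
    exact ⟨v, hv.2, by simpa using hv.apply_eq_smul⟩
  · exact Module.End.hasEigenvalue_of_hasEigenvector
      ⟨by simpa [Module.End.mem_eigenspace_iff] using hAv, hv⟩

-- Compare `v` with `u` at a coordinate where `‖v i‖ / u i` is maximal.
theorem norm_le_of_mulVec_eq_smul_of_pos {ι : Type*} [Fintype ι] {M : Matrix ι ι ℝ}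
    (hM : ∀ i j, 0 ≤ M i j) {u : ι → ℝ} (hu : ∀ i, 0 < u i) {μ : ℝ} (hMu : M *ᵥ u = μ • u)
    {lam : ℂ} {v : ι → ℂ} (hv : v ≠ 0) (hMv : M.map (fun x => (x : ℂ)) *ᵥ v = lam • v) :
    ‖lam‖ ≤ μ := by
  obtain ⟨j, hj⟩ := Function.ne_iff.1 hv
  have : Nonempty ι := ⟨j⟩
  obtain ⟨i, hi⟩ := Finite.exists_max fun i => ‖v i‖ / u i
  set t := ‖v i‖ / u i
  have hvt : ∀ j, ‖v j‖ ≤ t * u j := fun j => (div_le_iff₀ (hu j)).1 (hi j)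
  have hvi : ‖v i‖ = t * u i := (div_mul_cancel₀ _ (hu i).ne').symm
  have ht : 0 < t := (div_pos (norm_pos_iff.2 hj) (hu j)).trans_le (hi j)
  have key : ‖lam‖ * ‖v i‖ ≤ μ * ‖v i‖ := calc
    ‖lam‖ * ‖v i‖ = ‖∑ j, (M i j : ℂ) * v j‖ := by
      rw [← norm_mul, ← smul_eq_mul, ← Pi.smul_apply, ← hMv]; rfl
    _ ≤ ∑ j, M i j * ‖v j‖ := (norm_sum_le _ _).trans_eq (by
      simp [abs_of_nonneg (hM i _)])
    _ ≤ ∑ j, M i j * (t * u j) := by gcongr with j; exacts [hM i j, hvt j]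
    _ = t * (M *ᵥ u) i := by
      simp only [mulVec, dotProduct, mul_sum]; exact sum_congr rfl fun j _ => by ring
    _ = μ * ‖v i‖ := by rw [hMu, hvi, Pi.smul_apply, smul_eq_mul]; ring
  exact le_of_mul_le_mul_right key (hvi ▸ mul_pos ht (hu i))

theorem specRad_eq_of_mulVec_eq_smul_of_pos {n : ℕ} [NeZero n] {M : Matrix (Fin n) (Fin n) ℝ}
    (hM : ∀ i j, 0 ≤ M i j) {u : Fin n → ℝ} (hu : ∀ i, 0 < u i) {μ : ℝ}
    (hMu : M *ᵥ u = μ • u) : specRad M = μ := by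
  have hbound : ∀ lam ∈ spectrum ℂ (M.map (fun x => (x : ℂ))), ‖lam‖ ≤ μ := fun lam hlam => by
    obtain ⟨v, hv, hMv⟩ := (Matrix.mem_spectrum_iff_exists_mulVec_eq_smul _ lam).1 hlam
    exact norm_le_of_mulVec_eq_smul_of_pos hM hu hMu hv hMv
  have hμ : (μ : ℂ) ∈ spectrum ℂ (M.map (fun x => (x : ℂ))) := by
    refine (Matrix.mem_spectrum_iff_exists_mulVec_eq_smul _ _).2 ⟨fun i => u i, ?_, ?_⟩
    · exact Function.ne_iff.2 ⟨0, by simpa using (hu 0).ne'⟩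
    · ext i
      have := congrFun hMu i
      simp only [mulVec, dotProduct, Matrix.map_apply, Pi.smul_apply, smul_eq_mul] at this ⊢
      exact_mod_cast this
  have hμ0 : 0 ≤ μ := (abs_nonneg μ).trans (by simpa using hbound _ hμ)
  refine IsGreatest.csSup_eq ⟨⟨μ, hμ, by simp [abs_of_nonneg hμ0]⟩, ?_⟩
  rintro r ⟨lam, hlam, rfl⟩
  exact hbound lam hlam

section Distance

variable {n : ℕ} (G : Digraph (Fin n))

theorem dWalk_zero_iff {i j : Fin n} : DWalk G i j 0 ↔ i = j :=
  ⟨fun ⟨f, hi, hj, _⟩ => hi ▸ hj, fun h => ⟨fun _ => j, h ▸ rfl, rfl, by simp⟩⟩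

theorem dWalk_one_iff {i j : Fin n} : DWalk G i j 1 ↔ G.Adj i j :=
  ⟨fun ⟨f, hi, hj, h⟩ => hi ▸ hj ▸ h 0 one_pos,
    fun h => ⟨fun l => if l = 0 then i else j, rfl, rfl, by simpa using h⟩⟩

theorem ddist_eq_of_dWalk {i j : Fin n} {d : ℕ} (hd : DWalk G i j d)
    (hlt : ∀ t < d, ¬ DWalk G i j t) : ddist G i j = d :=
  le_antisymm (Nat.sInf_le hd)
    (not_lt.1 fun h => hlt _ h (Nat.sInf_mem (s := {t | DWalk G i j t}) ⟨d, hd⟩))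

theorem ddist_self (i : Fin n) : ddist G i i = 0 :=
  ddist_eq_of_dWalk G ((dWalk_zero_iff G).2 rfl) (by simp)

theorem ddist_eq_one {i j : Fin n} (hij : i ≠ j) (h : G.Adj i j) : ddist G i j = 1 :=
  ddist_eq_of_dWalk G ((dWalk_one_iff G).2 h) fun t ht => by
    rw [Nat.lt_one_iff.1 ht, dWalk_zero_iff]; exact hij

theorem ddist_eq_two {i j w : Fin n} (hij : i ≠ j) (hn : ¬ G.Adj i j) (hiw : G.Adj i w)
    (hwj : G.Adj w j) : ddist G i j = 2 := by
  refine ddist_eq_of_dWalk G ⟨fun l => if l = 0 then i else if l = 1 then w else j,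
    rfl, rfl, fun l hl => ?_⟩ fun t ht => ?_
  · interval_cases l <;> simpa
  · interval_cases t
    · rwa [dWalk_zero_iff]
    · rwa [dWalk_one_iff]

end Distance

theorem Dalpha_mulVec_apply {n : ℕ} (α : ℝ) (G : Digraph (Fin n)) (v : Fin n → ℝ) (i : Fin n) :
    (Dalpha α G *ᵥ v) i = α * transm G i * v i + (1 - α) * ∑ j, (ddist G i j : ℝ) * v j := by
  rw [Dalpha, add_mulVec, smul_mulVec, smul_mulVec, Pi.add_apply, Pi.smul_apply, Pi.smul_apply,
    mulVec_diagonal]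
  simp only [smul_eq_mul, mulVec, dotProduct, of_apply]
  ring

theorem Dalpha_nonneg {n : ℕ} {α : ℝ} (h0 : 0 ≤ α) (h1 : α ≤ 1) (G : Digraph (Fin n))
    (i j : Fin n) : 0 ≤ Dalpha α G i j := by
  have htr : 0 ≤ transm G i := sum_nonneg fun _ _ => Nat.cast_nonneg _
  simp only [Dalpha, Matrix.add_apply, Matrix.smul_apply, diagonal_apply, of_apply, smul_eq_mul]
  split_ifs <;> subst_vars <;> positivity

section KD

variable {n k m : ℕ}

theorem ddist_KD (hk : 1 ≤ k) (i j : Fin n) : ddist (KD n k m) i j =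
    if i = j then 0 else if k + m ≤ (i : ℕ) ∧ k ≤ (j : ℕ) ∧ (j : ℕ) < k + m then 2 else 1 := by
  split_ifs with hij hij'
  · exact hij ▸ ddist_self _ i
  · obtain ⟨w, hw⟩ : ∃ w : Fin n, (w : ℕ) = 0 := ⟨⟨0, by omega⟩, rfl⟩
    refine ddist_eq_two _ hij (fun h => h.2 hij') (w := w)
      ⟨Fin.ne_of_val_ne ?_, ?_⟩ ⟨Fin.ne_of_val_ne ?_, ?_⟩ <;> omega
  · exact ddist_eq_one _ hij ⟨hij, hij'⟩

theorem sum_ddist_KD_mul (hk : 1 ≤ k) (v : Fin n → ℝ) (i : Fin n) :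
    ∑ j, (ddist (KD n k m) i j : ℝ) * v j = ∑ j, v j - v i + if k + m ≤ (i : ℕ) then
      ∑ j ∈ univ.filter fun j : Fin n => k ≤ (j : ℕ) ∧ (j : ℕ) < k + m, v j else 0 := by
  have hterm : ∀ j, (ddist (KD n k m) i j : ℝ) * v j = v j - (if i = j then v j else 0) +
      if k + m ≤ (i : ℕ) then (if k ≤ (j : ℕ) ∧ (j : ℕ) < k + m then v j else 0) else 0 := by
    intro j
    rw [ddist_KD hk]
    split_ifs <;> subst_vars <;> first | omega | (push_cast; ring)
  rw [sum_congr rfl fun j _ => hterm j, sum_add_distrib, sum_sub_distrib, sum_ite_eq,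
    if_pos (mem_univ i)]
  split_ifs <;> simp [sum_filter]

theorem card_filter_KD_mid (hkm : k + m ≤ n) :
    #(univ.filter fun j : Fin n => k ≤ (j : ℕ) ∧ (j : ℕ) < k + m) = m := by
  rw [← card_map Fin.valEmbedding]
  convert Nat.card_Ico k (k + m) using 2
  · ext j
    simp only [mem_map, mem_filter, mem_univ, true_and, Fin.valEmbedding_apply, mem_Ico]
    exact ⟨by rintro ⟨j, hj, rfl⟩; exact hj, fun hj => ⟨⟨j, by omega⟩, hj, rfl⟩⟩
  · omega

theorem transm_KD (hk : 1 ≤ k) (hkm : k + m ≤ n) (i : Fin n) :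
    transm (KD n k m) i = n - 1 + if k + m ≤ (i : ℕ) then (m : ℝ) else 0 := by
  simpa [transm, card_filter_KD_mid hkm] using sum_ddist_KD_mul (m := m) hk 1 i

def twoBlockVec (n s : ℕ) (a c : ℝ) : Fin n → ℝ := fun j => if (j : ℕ) < s then a else c

theorem sum_twoBlockVec {s : ℕ} (hs : s ≤ n) (a c : ℝ) :
    ∑ j, twoBlockVec n s a c j = s * a + (n - s) * c := by
  simp only [twoBlockVec]
  rw [Fin.sum_univ_eq_sum_range (fun j => if j < s then a else c)]
  obtain ⟨p, rfl⟩ := Nat.exists_eq_add_of_le hs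
  rw [sum_range_add]
  simp +contextual [sum_ite_of_true]

-- `ha`, `hc`: `(a, c)` is a `μ`-eigenvector of the quotient matrix of `D_α` for the partition
-- into the vertices `< k + m` and `≥ k + m`.
theorem Dalpha_KD_mulVec_twoBlockVec (hk : 1 ≤ k) (hkm : k + m ≤ n) (α a c μ : ℝ)
    (ha : (μ - (α * (n - 1) + (1 - α) * (k + m - 1))) * a = (1 - α) * (n - k - m) * c)
    (hc : (μ - (α * (n - 1 + m) + (1 - α) * (n - k - m - 1))) * c = (1 - α) * (k + 2 * m) * a) :
    Dalpha α (KD n k m) *ᵥ twoBlockVec n (k + m) a c = μ • twoBlockVec n (k + m) a c := by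
  have hmid : ∑ j ∈ univ.filter fun j : Fin n => k ≤ (j : ℕ) ∧ (j : ℕ) < k + m,
      twoBlockVec n (k + m) a c j = m * a := by
    have hj : ∀ j ∈ univ.filter fun j : Fin n => k ≤ (j : ℕ) ∧ (j : ℕ) < k + m,
        twoBlockVec n (k + m) a c j = a := fun j hj => if_pos (mem_filter.1 hj).2.2
    rw [sum_congr rfl hj, sum_const, card_filter_KD_mid hkm, nsmul_eq_mul]
  ext i
  rw [Dalpha_mulVec_apply, sum_ddist_KD_mul hk, transm_KD hk hkm, sum_twoBlockVec hkm, hmid,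
    Pi.smul_apply, smul_eq_mul]
  by_cases hi : k + m ≤ (i : ℕ)
  · simp only [twoBlockVec, hi, if_true, if_neg (not_lt.2 hi)]
    push_cast
    linear_combination -hc
  · simp only [twoBlockVec, hi, if_false, if_pos (not_le.1 hi)]
    push_cast
    linear_combination -ha

end KD

theorem quadratic_larger_root {x w y μ : ℝ} (hy : 0 < y)
    (hμ : μ = (x + w + √((x - w) ^ 2 + 4 * y)) / 2) : (μ - x) * (μ - w) = y ∧ 0 < μ - x := by
  have hsq := Real.sq_sqrt (by positivity : 0 ≤ (x - w) ^ 2 + 4 * y)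
  have hlt : |x - w| < √((x - w) ^ 2 + 4 * y) := by
    rw [← Real.sqrt_sq_eq_abs]; exact Real.sqrt_lt_sqrt (sq_nonneg _) (by linarith)
  subst hμ
  constructor
  · linear_combination hsq / 4
  · linarith [le_abs_self (x - w)]

theorem stmt11_general {n k m : ℕ} (hk : 1 ≤ k) (hmn : m + k + 1 ≤ n)
    (α : ℝ) (h0 : 0 ≤ α) (h1 : α < 1) :
    mualpha α (KD n k m) =
      (α * m + α * n + n - 2 + Real.sqrt ((1 - α) ^ 2 * n ^ 2 +
        (2 * α ^ 2 - 6 * α + 4) * m * n + (α ^ 2 + 4 * α - 4) * m ^ 2 -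
        4 * (1 - α) * k * m)) / 2 := by
  have : NeZero n := ⟨by omega⟩
  have hnkm : (1 : ℝ) ≤ n - k - m := by
    have : (m + k + 1 : ℝ) ≤ n := by exact_mod_cast hmn
    linarith
  set μ := (α * m + α * n + n - 2 + Real.sqrt ((1 - α) ^ 2 * n ^ 2 +
    (2 * α ^ 2 - 6 * α + 4) * m * n + (α ^ 2 + 4 * α - 4) * m ^ 2 - 4 * (1 - α) * k * m)) / 2
    with hμ
  set x := α * (n - 1) + (1 - α) * (k + m - 1)
  set w := α * (n - 1 + m) + (1 - α) * (n - k - m - 1)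
  set a := (1 - α) * (n - k - m)
  set b := (1 - α) * (k + 2 * m)
  have ha : 0 < a := mul_pos (by linarith) (by linarith)
  have hb : 0 < b := mul_pos (by linarith) (by positivity)
  obtain ⟨hroot, hc⟩ := quadratic_larger_root (x := x) (w := w) (μ := μ) (mul_pos ha hb) (by
    rw [hμ, show (1 - α) ^ 2 * n ^ 2 + (2 * α ^ 2 - 6 * α + 4) * m * n + (α ^ 2 + 4 * α - 4) * m ^ 2
      - 4 * (1 - α) * k * m = (x - w) ^ 2 + 4 * (a * b) by ring]
    ring)
  refine specRad_eq_of_mulVec_eq_smul_of_pos (Dalpha_nonneg h0 h1.le _)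
    (u := twoBlockVec n (k + m) a (μ - x))
    (fun j => by unfold twoBlockVec; split_ifs <;> assumption)
    (Dalpha_KD_mulVec_twoBlockVec hk (by omega) α a _ _ (by ring) (by linear_combination hroot))

theorem stmt11 {n k m : ℕ} (hk : 1 ≤ k) (hkn : k + 2 ≤ n) (hm : 1 ≤ m) (hmn : m + k + 1 ≤ n)
    (α : ℝ) (h0 : 0 ≤ α) (h1 : α < 1) :
    mualpha α (KD n k m) =
      (α * m + α * n + n - 2 + Real.sqrt ((1 - α) ^ 2 * n ^ 2 +
        (2 * α ^ 2 - 6 * α + 4) * m * n + (α ^ 2 + 4 * α - 4) * m ^ 2 -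
        4 * (1 - α) * k * m)) / 2 :=
  stmt11_general hk hmn α h0 h1
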